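/- arXiv:2304.03260 — 6 statements merged into one kernel-verified Lean document; each statement's English description precedes it below -/
import Mathlib

section
/- Let 𝒜 be an abelian category and 𝒞 a subcategory of 𝒜. Then 𝒞 is IE-closed (closed under images and extensions) if and only if there exist a torsion class 𝒯 and a torsion-free class ℱ in 𝒜 such that 𝒞 = 𝒯 ∩ ℱ. -/
universe v u

open CategoryTheory CategoryTheory.Limits

section Defs

variable (A : Type u) [Category.{v} A] [Abelian A]

/-- A class of objects is closed under isomorphisms. -/
def IsoClosed (C : Set A) : Prop := ∀ X Y : A, (X ≅ Y) → X ∈ C → Y ∈ C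

/-- A class of objects contains the zero object(s). -/
def ContainsZero (C : Set A) : Prop := ∀ X : A, IsZero X → X ∈ C

/-- A class of objects is closed under quotients: for every epimorphism `C ↠ X`
with `C` in the class, `X` is in the class. -/
def QuotientsClosed (C : Set A) : Prop :=
  ∀ (X Y : A) (f : X ⟶ Y), Epi f → X ∈ C → Y ∈ C

/-- A class of objects is closed under subobjects: for every monomorphism `X ↪ C`
with `C` in the class, `X` is in the class. -/
def SubobjectsClosed (C : Set A) : Prop :=
  ∀ (X Y : A) (f : X ⟶ Y), Mono f → Y ∈ C → X ∈ C

/-- A class of objects is closed under images: for every morphism `f : C₁ ⟶ C₂` with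
`C₁, C₂` in the class, the image of `f` is in the class. -/
def ImagesClosed (C : Set A) : Prop :=
  ∀ (X Y : A) (f : X ⟶ Y), X ∈ C → Y ∈ C → image f ∈ C

/-- A class of objects is closed under extensions: for every short exact sequence
`0 → L → M → N → 0` with `L, N` in the class, `M` is in the class. -/
def ExtClosed (C : Set A) : Prop :=
  ∀ S : ShortComplex A, S.ShortExact → S.X₁ ∈ C → S.X₃ ∈ C → S.X₂ ∈ C

/-- A torsion class: a subcategory closed under quotients and extensions. -/
def IsTorsionClass (C : Set A) : Prop :=
  IsoClosed A C ∧ ContainsZero A C ∧ QuotientsClosed A C ∧ ExtClosed A C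

/-- A torsion-free class: a subcategory closed under subobjects and extensions. -/
def IsTorsionFreeClass (C : Set A) : Prop :=
  IsoClosed A C ∧ ContainsZero A C ∧ SubobjectsClosed A C ∧ ExtClosed A C

/-- `Fac C`: the class of objects admitting an epimorphism from an object of `C`. -/
def Fac (C : Set A) : Set A := {X | ∃ (C₀ : A) (f : C₀ ⟶ X), C₀ ∈ C ∧ Epi f}

/-- `Sub C`: the class of objects admitting a monomorphism into an object of `C`. -/
def Subs (C : Set A) : Set A := {X | ∃ (C₀ : A) (f : X ⟶ C₀), C₀ ∈ C ∧ Mono f}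

/-- `Filt D`: the class of objects admitting a finite filtration
`0 = X₀ ≤ X₁ ≤ ⋯ ≤ Xₙ = X` whose subquotients `Xᵢ/Xᵢ₋₁` all belong to `D`.
Equivalently (inductively): `X` is zero, or `X` is an extension of an object of `D`
by an object of `Filt D`. -/
inductive Filt (D : Set A) : A → Prop
  | zero (X : A) : IsZero X → Filt D X
  | ext (S : ShortComplex A) : S.ShortExact → Filt D S.X₁ → S.X₃ ∈ D → Filt D S.X₂

end Defs

/-!
STATEMENT 2: For an abelian category `𝒜` and a subcategory `𝒞` of `𝒜`, `𝒞` is IE-closed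
(closed under images and extensions) iff there exist a torsion class `𝒯` and a
torsion-free class `ℱ` such that `𝒞 = 𝒯 ∩ ℱ`.
-/

section Aux

open CategoryTheory.Abelian.Pseudoelement ZeroObject

variable {A : Type u} [Category.{v} A] [Abelian A]

lemma filt_iso {D : Set A} {X : A} (h : Filt A D X) : ∀ {Y : A}, (X ≅ Y) → Filt A D Y := by
  induction h with
  | zero X hX =>
    intro Y e
    exact Filt.zero Y (hX.of_iso e.symm)
  | ext S hS h1 h3 _ =>
    intro Y e
    refine Filt.ext (ShortComplex.mk (S.f ≫ e.hom) (e.inv ≫ S.g) (by simp [S.zero])) ?_ h1 h3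
    exact ShortComplex.shortExact_of_iso (S₁ := S)
      (ShortComplex.isoMk (Iso.refl _) e (Iso.refl _) (by simp) (by simp)) hS

lemma filt_of_mem {D : Set A} {X : A} (hX : X ∈ D) : Filt A D X := by
  refine Filt.ext (ShortComplex.mk (0 : (0 : A) ⟶ X) (𝟙 X) (by simp)) ?_
    (Filt.zero _ (isZero_zero A)) hX
  refine ShortComplex.ShortExact.mk' ?_ ?_ inferInstance
  · rw [ShortComplex.exact_iff_mono _ rfl]
    exact inferInstance
  · exact ⟨fun g h _ => (isZero_zero A).eq_of_tgt g h⟩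

noncomputable def pbL (S : ShortComplex A) {W : A} (r : W ⟶ S.X₃) : S.X₁ ⟶ pullback S.g r :=
  pullback.lift S.f 0 (by simp [S.zero])

@[simp] lemma pbL_fst (S : ShortComplex A) {W : A} (r : W ⟶ S.X₃) :
    pbL S r ≫ pullback.fst S.g r = S.f := pullback.lift_fst _ _ _

@[simp] lemma pbL_snd (S : ShortComplex A) {W : A} (r : W ⟶ S.X₃) :
    pbL S r ≫ pullback.snd S.g r = 0 := pullback.lift_snd _ _ _

lemma pb_shortExact (S : ShortComplex A) (hS : S.ShortExact) {W : A} (r : W ⟶ S.X₃) :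
    (ShortComplex.mk (pbL S r) (pullback.snd S.g r) (pbL_snd S r)).ShortExact := by
  haveI := hS.mono_f
  haveI := hS.epi_g
  have hmono : Mono (pbL S r) := mono_of_mono_fac (pbL_fst S r)
  refine ShortComplex.ShortExact.mk' ?_ hmono inferInstance
  apply ShortComplex.exact_of_f_is_kernel
  refine KernelFork.IsLimit.ofι _ _
    (fun {W'} u hu => hS.fIsKernel.lift (KernelFork.ofι (u ≫ pullback.fst S.g r)
      (by rw [Category.assoc, pullback.condition, ← Category.assoc, hu, zero_comp])))
    (fun {W'} u hu => ?_) (fun {W'} u hu m hm => ?_)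
  · apply pullback.hom_ext
    · rw [Category.assoc, pbL_fst]
      exact Fork.IsLimit.lift_ι hS.fIsKernel
    · rw [Category.assoc, pbL_snd, comp_zero, hu]
  · apply Fork.IsLimit.hom_ext hS.fIsKernel
    have h1 : Fork.ι (KernelFork.ofι S.f S.zero) = S.f := rfl
    rw [Fork.IsLimit.lift_ι hS.fIsKernel]
    show m ≫ S.f = _
    rw [← pbL_fst S r, ← Category.assoc, hm]
    rfl

lemma filt_ext_aux {D : Set A} {Z : A} (hZ : Filt A D Z) :
    ∀ (T : ShortComplex A), T.ShortExact → (T.X₃ ≅ Z) → Filt A D T.X₁ → Filt A D T.X₂ := by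
  induction hZ with
  | zero Z hz =>
    intro T hT e h1
    haveI := hT.mono_f
    have hz3 : IsZero T.X₃ := hz.of_iso e
    haveI : Epi T.f := hT.exact.epi_f (hz3.eq_of_tgt _ _)
    haveI : IsIso T.f := isIso_of_mono_of_epi T.f
    exact filt_iso h1 (asIso T.f)
  | ext T hT h1 h3 ih =>
    intro S hS e h1S
    haveI := hS.mono_f
    haveI := hS.epi_g
    haveI := hT.mono_f
    haveI := hT.epi_g
    set g' : S.X₂ ⟶ T.X₂ := S.g ≫ e.hom with hg'
    have hzero' : S.f ≫ g' = 0 := by rw [hg', ← Category.assoc, S.zero, zero_comp]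
    have hS' : (ShortComplex.mk S.f g' hzero').ShortExact :=
      ShortComplex.shortExact_of_iso (S₁ := S)
        (ShortComplex.isoMk (Iso.refl _) (Iso.refl _) e (by simp) (by simp [hg'])) hS
    -- P := pullback g' T.f, short exact sequence S.X₁ → P → T.X₁
    have hses1 := pb_shortExact _ hS' T.f
    have hP : Filt A D (pullback g' T.f) := ih _ hses1 (Iso.refl _) h1S
    -- short exact sequence P → S.X₂ → T.X₃
    haveI : Epi g' := epi_comp _ _
    have hzero2 : pullback.fst g' T.f ≫ (g' ≫ T.g) = 0 := by
      rw [← Category.assoc, pullback.condition, Category.assoc, T.zero, comp_zero]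
    refine Filt.ext (ShortComplex.mk (pullback.fst g' T.f) (g' ≫ T.g) hzero2) ?_ hP h3
    refine ShortComplex.ShortExact.mk' ?_ inferInstance (epi_comp _ _)
    apply exact_of_pseudo_exact
    intro b hb
    replace hb : pseudoApply (g' ≫ T.g) b = 0 := hb
    rw [Abelian.Pseudoelement.comp_apply] at hb
    obtain ⟨y, hy⟩ := pseudo_exact_of_exact hT.exact _ hb
    obtain ⟨s, hs1, _⟩ := pseudo_pullback hy.symm
    exact ⟨s, hs1⟩

lemma filt_extClosed {D : Set A} : ExtClosed A {X : A | Filt A D X} :=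
  fun S hS h1 h3 => filt_ext_aux h3 S hS (Iso.refl _) h1

lemma filt_quot_aux {D : Set A} (hD : QuotientsClosed A D) {X : A} (h : Filt A D X) :
    ∀ (B : A) (q : X ⟶ B), Epi q → Filt A D B := by
  induction h with
  | zero X hz =>
    intro B q hq
    refine Filt.zero B ?_
    rw [IsZero.iff_id_eq_zero]
    have h0 : q ≫ 𝟙 B = q ≫ 0 := by rw [hz.eq_of_src q 0]; simp
    exact (cancel_epi q).1 h0
  | ext S hS h1 h3 ih =>
    intro B q hq
    haveI := hq
    haveI := hS.epi_g
    set φ : S.X₁ ⟶ B := S.f ≫ q with hφ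
    have hY' : Filt A D (image φ) := ih (image φ) (factorThruImage φ) inferInstance
    have hcomm0 : φ ≫ cokernel.π (image.ι φ) = 0 := by
      calc φ ≫ cokernel.π (image.ι φ)
          = factorThruImage φ ≫ image.ι φ ≫ cokernel.π (image.ι φ) := by
            rw [← Category.assoc, image.fac]
        _ = 0 := by rw [cokernel.condition, comp_zero]
    have hcomm : S.f ≫ q ≫ cokernel.π (image.ι φ) = 0 := by
      rw [← Category.assoc, ← hφ]; exact hcomm0
    set w : S.X₃ ⟶ cokernel (image.ι φ) :=
      hS.gIsCokernel.desc (CokernelCofork.ofπ (q ≫ cokernel.π (image.ι φ)) hcomm) with hwdef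
    have hw : S.g ≫ w = q ≫ cokernel.π (image.ι φ) :=
      Cofork.IsColimit.π_desc hS.gIsCokernel
    have hepi : Epi (S.g ≫ w) := by rw [hw]; exact epi_comp _ _
    have hw_epi : Epi w := epi_of_epi S.g w
    have hZ' : cokernel (image.ι φ) ∈ D := hD _ _ w hw_epi h3
    refine Filt.ext (ShortComplex.mk (image.ι φ) (cokernel.π (image.ι φ))
      (cokernel.condition _)) ?_ hY' hZ'
    exact ShortComplex.ShortExact.mk' (ShortComplex.exact_cokernel _) inferInstance inferInstance

lemma filt_quotientsClosed {D : Set A} (hD : QuotientsClosed A D) :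
    QuotientsClosed A {X : A | Filt A D X} :=
  fun _ B q hq hX => filt_quot_aux hD hX B q hq

lemma filt_sub_aux {D : Set A} (hD : SubobjectsClosed A D) {X : A} (h : Filt A D X) :
    ∀ (B : A) (m : B ⟶ X), Mono m → Filt A D B := by
  induction h with
  | zero X hz =>
    intro B m hm
    refine Filt.zero B ?_
    rw [IsZero.iff_id_eq_zero]
    have h0 : 𝟙 B ≫ m = 0 ≫ m := by rw [hz.eq_of_tgt m 0]; simp
    exact (cancel_mono m).1 h0
  | ext S hS h1 h3 ih =>
    intro B m hm
    haveI := hm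
    haveI := hS.mono_f
    set φ : B ⟶ S.X₃ := m ≫ S.g with hφ
    have hcond : (kernel.ι φ ≫ m) ≫ S.g = 0 := by
      rw [Category.assoc, ← hφ, kernel.condition]
    set u : kernel φ ⟶ S.X₁ :=
      hS.fIsKernel.lift (KernelFork.ofι (kernel.ι φ ≫ m) hcond) with hudef
    have hu : u ≫ S.f = kernel.ι φ ≫ m := Fork.IsLimit.lift_ι hS.fIsKernel
    have humono : Mono (u ≫ S.f) := by rw [hu]; exact mono_comp _ _
    have hu_mono : Mono u := mono_of_mono u S.f
    have hK : Filt A D (kernel φ) := ih _ u hu_mono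
    have hI : image φ ∈ D := hD _ _ (image.ι φ) inferInstance h3
    have hz2 : kernel.ι φ ≫ factorThruImage φ = 0 := by
      rw [← cancel_mono (image.ι φ), Category.assoc, image.fac, kernel.condition, zero_comp]
    refine Filt.ext (ShortComplex.mk (kernel.ι φ) (factorThruImage φ) hz2) ?_ hK hI
    refine ShortComplex.ShortExact.mk' ?_ inferInstance inferInstance
    apply exact_of_pseudo_exact
    intro b hb
    replace hb : pseudoApply (factorThruImage φ) b = 0 := hb
    have hφb : pseudoApply φ b = 0 := by
      rw [← image.fac φ, Abelian.Pseudoelement.comp_apply, hb, apply_zero]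
    exact pseudo_exact_of_exact (ShortComplex.exact_kernel φ) _ hφb

lemma filt_subobjectsClosed {D : Set A} (hD : SubobjectsClosed A D) :
    SubobjectsClosed A {X : A | Filt A D X} :=
  fun B _ m hm hX => filt_sub_aux hD hX B m hm

/-- From closure under images (plus isos), closure under "epi-mono interval". -/
lemma hip_of_images (C : Set A) (hiso : IsoClosed A C) (himg : ImagesClosed A C) :
    ∀ (X Y Z : A) (p : X ⟶ Y) (i : Y ⟶ Z), Epi p → Mono i → X ∈ C → Z ∈ C → Y ∈ C := by
  intro X Y Z p i hp hi hX hZ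
  haveI := hp
  haveI := hi
  haveI : StrongEpi p := strongEpi_of_epi p
  have h := himg X Z (p ≫ i) hX hZ
  exact hiso _ _ (image.isoStrongEpiMono p i rfl).symm h

/-- Key lemma A: if `C` is suitably closed, then any object of `Filt (Fac C)` which embeds
into an object of `C` is in `C`. -/
lemma claimA (C : Set A) (hzero : ContainsZero A C) (hext : ExtClosed A C)
    (hip : ∀ (X Y Z : A) (p : X ⟶ Y) (i : Y ⟶ Z), Epi p → Mono i → X ∈ C → Z ∈ C → Y ∈ C) :
    ∀ {M : A}, Filt A (Fac A C) M → M ∈ Subs A C → M ∈ C := by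
  intro M h
  induction h with
  | zero X hz => exact fun _ => hzero X hz
  | ext S hS h1 h3 ih =>
    intro hsub
    obtain ⟨c, i, hc, hi⟩ := hsub
    haveI := hi
    haveI := hS.mono_f
    haveI := hS.epi_g
    have hY : S.X₁ ∈ C := ih ⟨c, S.f ≫ i, hc, mono_comp _ _⟩
    obtain ⟨cz, r, hcz, hr⟩ := h3
    haveI := hr
    have hses := pb_shortExact S hS r
    have hM' : pullback S.g r ∈ C := hext _ hses hY hcz
    exact hip _ _ _ (pullback.fst S.g r) i inferInstance inferInstance hM' hc

/-- Transport of `Filt` to the opposite category. -/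
lemma filt_op {D : Set A} {D' : Set Aᵒᵖ} (hD : ∀ X : A, X ∈ D → Opposite.op X ∈ D') :
    ∀ {M : A}, Filt A D M → Filt Aᵒᵖ D' (Opposite.op M) := by
  intro M h
  induction h with
  | zero X hz => exact Filt.zero _ hz.op
  | ext S hS h1 h3 ih =>
    exact filt_extClosed S.op hS.op (filt_of_mem (hD _ h3)) ih

/-- Key lemma B (dual of A): if `C` is suitably closed, then any object of `Filt (Subs C)`
which is a quotient of an object of `C` is in `C`. -/
lemma claimB (C : Set A) (hiso : IsoClosed A C) (hzero : ContainsZero A C)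
    (hext : ExtClosed A C)
    (hip : ∀ (X Y Z : A) (p : X ⟶ Y) (i : Y ⟶ Z), Epi p → Mono i → X ∈ C → Z ∈ C → Y ∈ C)
    {M : A} (h : Filt A (Subs A C) M) (hfac : M ∈ Fac A C) : M ∈ C := by
  let C' : Set Aᵒᵖ := {X | X.unop ∈ C}
  have hiso' : IsoClosed Aᵒᵖ C' := fun X Y e hX => hiso _ _ e.unop.symm hX
  have hzero' : ContainsZero Aᵒᵖ C' := fun X hX => hzero X.unop hX.unop
  have hext' : ExtClosed Aᵒᵖ C' := fun S hS h1 h3 => hext S.unop hS.unop h3 h1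
  have hip' : ∀ (X Y Z : Aᵒᵖ) (p : X ⟶ Y) (i : Y ⟶ Z),
      Epi p → Mono i → X ∈ C' → Z ∈ C' → Y ∈ C' := by
    intro X Y Z p i hp hi hX hZ
    haveI := hp
    haveI := hi
    exact hip Z.unop Y.unop X.unop i.unop p.unop inferInstance inferInstance hZ hX
  have h' : Filt Aᵒᵖ (Fac Aᵒᵖ C') (Opposite.op M) := by
    refine filt_op ?_ h
    rintro X ⟨c, f, hc, hf⟩
    haveI := hf
    exact ⟨Opposite.op c, f.op, hc, inferInstance⟩
  have hsub' : Opposite.op M ∈ Subs Aᵒᵖ C' := by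
    obtain ⟨c, f, hc, hf⟩ := hfac
    haveI := hf
    exact ⟨Opposite.op c, f.op, hc, inferInstance⟩
  exact claimA C' hzero' hext' hip' h' hsub'

/-- The main forward inclusion: `Filt (Fac C) ∩ Filt (Subs C) ⊆ C`. -/
lemma inter_sub (C : Set A) (hiso : IsoClosed A C) (hzero : ContainsZero A C)
    (himg : ImagesClosed A C) (hext : ExtClosed A C) :
    ∀ {M : A}, Filt A (Fac A C) M → Filt A (Subs A C) M → M ∈ C := by
  have hip := hip_of_images C hiso himg
  have hsubs_closed : SubobjectsClosed A (Subs A C) := by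
    rintro X Y f hf ⟨c, g, hc, hg⟩
    haveI := hf; haveI := hg
    exact ⟨c, f ≫ g, hc, mono_comp _ _⟩
  intro M h
  induction h with
  | zero X hz => exact fun _ => hzero X hz
  | ext S hS h1 h3 ih =>
    intro hFsub
    haveI := hS.mono_f
    haveI := hS.epi_g
    have hY_F : Filt A (Subs A C) S.X₁ :=
      filt_sub_aux hsubs_closed hFsub S.X₁ S.f inferInstance
    have hY : S.X₁ ∈ C := ih hY_F
    obtain ⟨cz, r, hcz, hr⟩ := h3
    haveI := hr
    have hses := pb_shortExact S hS r
    have hM' : pullback S.g r ∈ C := hext _ hses hY hcz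
    exact claimB C hiso hzero hext hip hFsub
      ⟨pullback S.g r, pullback.fst S.g r, hM', inferInstance⟩

end Aux

theorem ie_closed_iff_inter_torsion_torsionFree
    (A : Type u) [Category.{v} A] [Abelian A]
    (C : Set A) (hiso : IsoClosed A C) (hzero : ContainsZero A C) :
    (ImagesClosed A C ∧ ExtClosed A C) ↔
      ∃ T F : Set A, IsTorsionClass A T ∧ IsTorsionFreeClass A F ∧ C = T ∩ F := by
  constructor
  · rintro ⟨himg, hext⟩
    refine ⟨{X | Filt A (Fac A C) X}, {X | Filt A (Subs A C) X},
      ⟨?_, ?_, ?_, ?_⟩, ⟨?_, ?_, ?_, ?_⟩, ?_⟩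
    · exact fun X Y e h => filt_iso h e
    · exact fun X h => Filt.zero X h
    · refine filt_quotientsClosed ?_
      rintro X Y f hf ⟨c, g, hc, hg⟩
      haveI := hf; haveI := hg
      exact ⟨c, g ≫ f, hc, epi_comp _ _⟩
    · exact filt_extClosed
    · exact fun X Y e h => filt_iso h e
    · exact fun X h => Filt.zero X h
    · refine filt_subobjectsClosed ?_
      rintro X Y f hf ⟨c, g, hc, hg⟩
      haveI := hf; haveI := hg
      exact ⟨c, f ≫ g, hc, mono_comp _ _⟩
    · exact filt_extClosed
    · ext X
      constructor
      · intro hX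
        exact ⟨filt_of_mem ⟨X, 𝟙 X, hX, inferInstance⟩,
          filt_of_mem ⟨X, 𝟙 X, hX, inferInstance⟩⟩
      · rintro ⟨hT, hF⟩
        exact inter_sub C hiso hzero himg hext hT hF
  · rintro ⟨T, F, ⟨hTiso, hTzero, hTquot, hText⟩, ⟨hFiso, hFzero, hFsub, hFext⟩, rfl⟩
    constructor
    · intro X Y f hX hY
      exact ⟨hTquot X (image f) (factorThruImage f) inferInstance hX.1,
        hFsub (image f) Y (image.ι f) inferInstance hY.2⟩
    · intro S hS h1 h3
      exact ⟨hText S hS h1.1 h3.1, hFext S hS h1.2 h3.2⟩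
end

section
/- Let 𝒜 be an abelian category and let 𝒞 be an IE-closed subcategory of 𝒜 (closed under images and extensions). Then 𝒞 = Filt(Fac 𝒞) ∩ Filt(Sub 𝒞); equivalently, 𝒞 equals the intersection of the smallest torsion class containing 𝒞 and the smallest torsion-free class containing 𝒞. -/
universe v u

open CategoryTheory CategoryTheory.Limits

/-!
Let `X ∈ Filt (Fac 𝒞) ∩ Filt (Sub 𝒞)` and induct on the first filtration, with top step
`0 → L → X → N → 0`, `N ∈ Fac 𝒞`. Since `Filt (Sub 𝒞)` is closed under subobjects, `L ∈ 𝒞` by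
induction, and pulling back along an epimorphism `C ↠ N` exhibits `X` as a quotient of an
extension of `C` by `L`; hence `X ∈ Fac 𝒞`. Now read the `Sub 𝒞`-filtration of `X` from the
bottom, `0 → L' → X → N' → 0` with `L' ∈ Sub 𝒞`: the quotient `N'` is again in `Fac 𝒞`, so
`N' ∈ 𝒞` by induction, and pushing out along a monomorphism `L' ↪ C'` embeds `X` in an extension
of `N'` by `C'`, so `X ∈ Sub 𝒞`. Finally `Fac 𝒞 ∩ Sub 𝒞 ⊆ 𝒞`, as an object with `C ↠ X ↪ C'`
is the image of the composite.
-/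

open CategoryTheory CategoryTheory.Limits ZeroObject

section

variable {A : Type u} [Category.{v} A] [Abelian A]

namespace CategoryTheory.ShortComplex.ShortExact

variable {S : ShortComplex A}

lemma pullback (hS : S.ShortExact) {Y : A} (p : Y ⟶ S.X₃) :
    (ShortComplex.mk (pullback.lift S.f 0 (by simp)) (pullback.snd S.g p)
      (pullback.lift_snd _ _ _)).ShortExact := by
  have := hS.mono_f
  have := hS.epi_g
  have : Mono (pullback.lift (f := S.g) (g := p) S.f 0 (by simp)) :=
    mono_of_mono_fac (pullback.lift_fst _ _ _)
  refine .mk' (exact_of_f_is_kernel _ (KernelFork.IsLimit.ofι' _ _ fun {W} t ht => ?_))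
    inferInstance inferInstance
  obtain ⟨w, hw⟩ := KernelFork.IsLimit.lift' hS.fIsKernel (t ≫ pullback.fst S.g p)
    (by rw [Category.assoc, pullback.condition, ← Category.assoc, ht, zero_comp])
  refine ⟨w, pullback.hom_ext ?_ ?_⟩
  · rw [Category.assoc, pullback.lift_fst]
    exact hw
  · rw [Category.assoc, pullback.lift_snd, comp_zero]
    exact ht.symm

lemma pushout (hS : S.ShortExact) {Y : A} (n : S.X₁ ⟶ Y) :
    (ShortComplex.mk (pushout.inr S.f n) (pushout.desc S.g 0 (by simp))
      (pushout.inr_desc _ _ _)).ShortExact := by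
  have := hS.mono_f
  have := hS.epi_g
  have : Epi (pushout.desc (f := S.f) (g := n) S.g 0 (by simp)) :=
    epi_of_epi_fac (pushout.inl_desc _ _ _)
  refine .mk' (exact_of_g_is_cokernel _ (CokernelCofork.IsColimit.ofπ' _ _ fun {W} t ht => ?_))
    inferInstance inferInstance
  obtain ⟨w, hw⟩ := CokernelCofork.IsColimit.desc' hS.gIsCokernel (pushout.inl S.f n ≫ t)
    (by rw [← Category.assoc, pushout.condition, Category.assoc, ht, comp_zero])
  refine ⟨w, pushout.hom_ext ?_ ?_⟩
  · rw [← Category.assoc, pushout.inl_desc]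
    exact hw
  · rw [← Category.assoc, pushout.inr_desc, zero_comp]
    exact ht.symm

-- The third isomorphism theorem: the pushout of `X ⟵ S.X₂ ↠ S.X₃` is `X / S.X₁`.
lemma comp_pushout_inl (hS : S.ShortExact) {X : A} (f : S.X₂ ⟶ X) [Mono f] :
    (ShortComplex.mk (S.f ≫ f) (pushout.inl f S.g)
      (by simp [pushout.condition])).ShortExact := by
  have := hS.mono_f
  have := hS.epi_g
  refine .mk' (exact_of_g_is_cokernel _ (CokernelCofork.IsColimit.ofπ' _ _ fun {W} t ht => ?_))
    inferInstance inferInstance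
  obtain ⟨u, hu⟩ := CokernelCofork.IsColimit.desc' hS.gIsCokernel (f ≫ t)
    (by rw [← Category.assoc]; exact ht)
  exact ⟨pushout.desc t u hu.symm, pushout.inl_desc _ _ _⟩

end CategoryTheory.ShortComplex.ShortExact

lemma shortExact_kernel_factorThruImage {X Y : A} (h : X ⟶ Y) :
    (ShortComplex.mk (kernel.ι h) (factorThruImage h)
      (comp_factorThruImage_eq_zero (kernel.condition h))).ShortExact :=
  .mk' (ShortComplex.exact_of_g_is_cokernel _ (ShortComplex.exact_kernel h).isColimitImage)
    inferInstance inferInstance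

namespace Filt

variable {D : Set A}

lemma of_mem {X : A} (hX : X ∈ D) : Filt A D X := by
  refine .ext (ShortComplex.mk (0 : 0 ⟶ X) (𝟙 X) (by simp)) ?_ (.zero _ (isZero_zero A)) hX
  exact .mk' ((ShortComplex.exact_iff_mono _ rfl).2 inferInstance) inferInstance inferInstance

lemma of_mono (hD : SubobjectsClosed A D) {X : A} (hX : Filt A D X) {Y : A} (m : Y ⟶ X)
    [Mono m] : Filt A D Y := by
  induction hX generalizing Y with
  | zero X hX => exact .zero Y (hX.of_mono m)
  | ext S hS _ hX₃ ih =>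
    have := hS.mono_f
    obtain ⟨t, ht⟩ := KernelFork.IsLimit.lift' hS.fIsKernel (kernel.ι (m ≫ S.g) ≫ m) (by simp)
    have : Mono t := mono_of_mono_fac ht
    -- `Y ∩ S.X₁` is the kernel of `Y ⟶ S.X₃`, and the quotient is its image in `S.X₃`.
    exact .ext _ (shortExact_kernel_factorThruImage (m ≫ S.g)) (ih t)
      (hD _ _ (image.ι (m ≫ S.g)) inferInstance hX₃)

end Filt

/-- Filtrations built up from the bottom subobject instead of the top quotient. -/
inductive CoFilt (D : Set A) : A → Prop
  | zero (X : A) : IsZero X → CoFilt D X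
  | ext (S : ShortComplex A) : S.ShortExact → S.X₁ ∈ D → CoFilt D S.X₃ → CoFilt D S.X₂

lemma CoFilt.of_shortExact {D : Set A} {L : A} (hL : CoFilt D L) {X N : A} {f : L ⟶ X}
    {g : X ⟶ N} {w : f ≫ g = 0} (hS : (ShortComplex.mk f g w).ShortExact) (hN : N ∈ D) :
    CoFilt D X := by
  induction hL generalizing X N with
  | zero L hL =>
    have := hS.epi_g
    have := hS.exact.mono_g (hL.eq_of_src _ _)
    have := isIso_of_mono_of_epi g
    refine .ext (ShortComplex.mk (inv g) (0 : X ⟶ L) comp_zero) ?_ hN (.zero L hL)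
    exact .mk' ((ShortComplex.exact_iff_epi _ rfl).2 inferInstance) inferInstance
      ⟨fun _ _ _ => hL.eq_of_src _ _⟩
  | ext S hS' hX₁ _ ih =>
    have := hS.mono_f
    exact .ext _ (hS'.comp_pushout_inl f) hX₁ (ih (hS.pushout S.g) hN)

lemma Filt.coFilt {D : Set A} {X : A} (hX : Filt A D X) : CoFilt D X := by
  induction hX with
  | zero X hX => exact .zero X hX
  | ext S hS _ hX₃ ih => exact ih.of_shortExact (f := S.f) hS hX₃

omit [Abelian A] in
lemma fac_quotientsClosed (C : Set A) : QuotientsClosed A (Fac A C) := by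
  rintro X Y f hf ⟨Z, p, hZ, hp⟩
  exact ⟨Z, p ≫ f, hZ, epi_comp p f⟩

omit [Abelian A] in
lemma subs_subobjectsClosed (C : Set A) : SubobjectsClosed A (Subs A C) := by
  rintro X Y f hf ⟨Z, i, hZ, hi⟩
  exact ⟨Z, f ≫ i, hZ, mono_comp f i⟩

section IEClosed

variable {C : Set A}

lemma mem_fac_of_shortExact (hext : ExtClosed A C) {S : ShortComplex A} (hS : S.ShortExact)
    (h₁ : S.X₁ ∈ C) (h₃ : S.X₃ ∈ Fac A C) : S.X₂ ∈ Fac A C := by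
  obtain ⟨Y, p, hY, hp⟩ := h₃
  exact ⟨_, pullback.fst S.g p, hext _ (hS.pullback p) h₁ hY, inferInstance⟩

lemma mem_subs_of_shortExact (hext : ExtClosed A C) {S : ShortComplex A} (hS : S.ShortExact)
    (h₁ : S.X₁ ∈ Subs A C) (h₃ : S.X₃ ∈ C) : S.X₂ ∈ Subs A C := by
  obtain ⟨Y, n, hY, hn⟩ := h₁
  exact ⟨_, pushout.inl S.f n, hext _ (hS.pushout n) hY h₃, inferInstance⟩

lemma mem_of_mem_fac_of_mem_subs (hiso : IsoClosed A C) (him : ImagesClosed A C) {X : A}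
    (hfac : X ∈ Fac A C) (hsubs : X ∈ Subs A C) : X ∈ C := by
  obtain ⟨Y, p, hY, hp⟩ := hfac
  obtain ⟨Z, i, hZ, hi⟩ := hsubs
  have := strongEpi_of_epi p
  exact hiso _ _ (image.isoStrongEpiMono p i rfl).symm (him _ _ (p ≫ i) hY hZ)

lemma mem_of_coFilt_subs_of_mem_fac (hiso : IsoClosed A C) (hzero : ContainsZero A C)
    (him : ImagesClosed A C) (hext : ExtClosed A C) {X : A} (hX : CoFilt (Subs A C) X)
    (hfac : X ∈ Fac A C) : X ∈ C := by
  induction hX with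
  | zero X hX => exact hzero X hX
  | ext S hS hX₁ _ ih =>
    have hX₃ : S.X₃ ∈ C := ih (fac_quotientsClosed C _ _ S.g hS.epi_g hfac)
    exact mem_of_mem_fac_of_mem_subs hiso him hfac (mem_subs_of_shortExact hext hS hX₁ hX₃)

lemma mem_of_filt_fac_of_filt_subs (hiso : IsoClosed A C) (hzero : ContainsZero A C)
    (him : ImagesClosed A C) (hext : ExtClosed A C) {X : A} (hfac : Filt A (Fac A C) X)
    (hsubs : Filt A (Subs A C) X) : X ∈ C := by
  induction hfac with
  | zero X hX => exact hzero X hX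
  | ext S hS _ hX₃ ih =>
    have := hS.mono_f
    have hX₁ : S.X₁ ∈ C := ih (hsubs.of_mono (subs_subobjectsClosed C) S.f)
    exact mem_of_coFilt_subs_of_mem_fac hiso hzero him hext hsubs.coFilt
      (mem_fac_of_shortExact hext hS hX₁ hX₃)

end IEClosed

end

theorem ie_closed_eq_inter_of_closures
    (A : Type u) [Category.{v} A] [Abelian A]
    (C : Set A) (hiso : IsoClosed A C) (hzero : ContainsZero A C)
    (him : ImagesClosed A C) (hext : ExtClosed A C) :
    C = {X | Filt A (Fac A C) X} ∩ {X | Filt A (Subs A C) X} := by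
  ext X
  refine ⟨fun hX => ⟨.of_mem ⟨X, 𝟙 X, hX, inferInstance⟩, .of_mem ⟨X, 𝟙 X, hX, inferInstance⟩⟩,
    fun ⟨hfac, hsubs⟩ => mem_of_filt_fac_of_filt_subs hiso hzero him hext hfac hsubs⟩
end

section
/- Let 𝒜 be an abelian category and 𝒞 a collection of objects of 𝒜. Then the subcategory Filt(Fac 𝒞) is closed under quotients: if X ∈ Filt(Fac 𝒞) and X ↠ Y is an epimorphism, then Y ∈ Filt(Fac 𝒞). -/
universe v u

open CategoryTheory CategoryTheory.Limits

/-!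
STATEMENT 6: For an abelian category `𝒜` and a collection `𝒞` of objects of `𝒜`,
`Filt (Fac 𝒞)` is closed under quotients: if `X ∈ Filt (Fac 𝒞)` and `X ↠ Y` is an
epimorphism, then `Y ∈ Filt (Fac 𝒞)`.
-/

theorem filt_fac_quotientsClosed
    (A : Type u) [Category.{v} A] [Abelian A] (C : Set A) :
    QuotientsClosed A {X | Filt A (Fac A C) X} := by
  intro X Y p hp hX
  simp only [Set.mem_setOf_eq] at hX ⊢
  induction hX generalizing Y with
  | zero X hz =>
    exact Filt.zero Y (IsZero.of_epi p hz)
  | ext S hS h1 h3 ih =>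
    have := hS.epi_g
    set h : S.X₁ ⟶ Y := S.f ≫ p with hh
    -- short complex image h ⟶ Y ⟶ cokernel h
    let S' : ShortComplex A :=
      ShortComplex.mk (Abelian.image.ι h) (cokernel.π h) (kernel.condition _)
    have hS' : S'.ShortExact := by
      refine ⟨S'.exact_of_f_is_kernel ?_⟩
      exact kernelIsKernel (cokernel.π h)
    -- image h is a quotient of X₁
    have hY1 : Filt A (Fac A C) S'.X₁ :=
      ih (Abelian.image h) (Abelian.factorThruImage h) inferInstance
    -- cokernel h is a quotient of X₃
    obtain ⟨C₀, e, hC₀, he⟩ := h3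
    have hcond : S.f ≫ (p ≫ cokernel.π h) = 0 := by
      rw [← Category.assoc, ← hh, cokernel.condition]
    let q : S.X₃ ⟶ cokernel h :=
      (hS.exact.gIsCokernel).desc (CokernelCofork.ofπ (p ≫ cokernel.π h) hcond)
    have hq : S.g ≫ q = p ≫ cokernel.π h :=
      Cofork.IsColimit.π_desc (hS.exact.gIsCokernel)
    have hqe : Epi q := by
      have : Epi (S.g ≫ q) := by rw [hq]; infer_instance
      exact epi_of_epi S.g q
    have hY3 : S'.X₃ ∈ Fac A C := by
      refine ⟨C₀, e ≫ q, hC₀, ?_⟩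
      exact epi_comp e q
    exact Filt.ext S' hS' hY1 hY3
end

section
/- Let 𝒜 be a noetherian abelian category (every object satisfies the ascending chain condition on subobjects) and let 𝒯 be a torsion class in 𝒜. Then 𝒯 is a strong torsion class: setting ℱ = {F ∈ 𝒜 : Hom(T, F) = 0 for all T ∈ 𝒯}, the pair (𝒯, ℱ) is a torsion pair, i.e., every object X of 𝒜 fits into a short exact sequence 0 → T → X → F → 0 with T ∈ 𝒯 and F ∈ ℱ. -/
universe v u

open CategoryTheory CategoryTheory.Limits

/-!
STATEMENT 16: Let `𝒜` be a noetherian abelian category (every object satisfies ACC on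
subobjects) and `𝒯` a torsion class in `𝒜`. Then `𝒯` is a strong torsion class: with
`ℱ = {F | Hom(T, F) = 0 for all T ∈ 𝒯}`, every object `X` fits into a short exact
sequence `0 → T → X → F → 0` with `T ∈ 𝒯` and `F ∈ ℱ`.
-/

theorem torsion_class_is_strong_of_noetherian
    (A : Type u) [Category.{v} A] [Abelian A]
    (hnoeth : ∀ X : A, WellFoundedGT (Subobject X))
    (T : Set A) (hT : IsTorsionClass A T) :
    ∀ X : A, ∃ S : ShortComplex A, S.ShortExact ∧
      S.X₁ ∈ T ∧ (∀ T₀ ∈ T, ∀ f : T₀ ⟶ S.X₃, f = 0) ∧ Nonempty (S.X₂ ≅ X) := by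
  obtain ⟨hIso, hZero, hQuot, hExt⟩ := hT
  intro X
  -- maximal torsion subobject
  obtain ⟨P, hPT, hPmax⟩ := (hnoeth X).wf.has_min {P : Subobject X | (P : A) ∈ T}
    ⟨⊥, hZero _ (IsZero.of_iso (isZero_zero A) Subobject.botCoeIsoZero)⟩
  set π : X ⟶ cokernel P.arrow := cokernel.π P.arrow with hπ
  refine ⟨ShortComplex.mk P.arrow π (cokernel.condition _), ⟨?_⟩, hPT, ?_, ⟨Iso.refl X⟩⟩
  · exact ShortComplex.exact_of_g_is_cokernel _ (cokernelIsCokernel P.arrow)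
  · intro T₀ hT₀ f
    by_contra hf
    -- image of f
    set m : Abelian.image f ⟶ cokernel P.arrow := Abelian.image.ι f with hm
    set e : T₀ ⟶ Abelian.image f := Abelian.factorThruImage f with he
    have hIT : Abelian.image f ∈ T := hQuot _ _ e inferInstance hT₀
    -- pullback of the image along π
    set Q : A := pullback m π with hQ
    set fst : Q ⟶ Abelian.image f := pullback.fst m π with hfst
    set snd : Q ⟶ X := pullback.snd m π with hsnd
    have hepi : Epi fst := inferInstance
    have hk0 : (0 : (P : A) ⟶ Abelian.image f) ≫ m = P.arrow ≫ π := by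
      simp [hπ]
    set k : (P : A) ⟶ Q := pullback.lift 0 P.arrow hk0 with hk
    have hks : k ≫ snd = P.arrow := pullback.lift_snd _ _ _
    have hkf : k ≫ fst = 0 := pullback.lift_fst _ _ _
    have hkmono : Mono k := mono_of_mono_fac hks
    -- P.arrow is a kernel of π
    have hPker : IsLimit (KernelFork.ofι P.arrow (cokernel.condition P.arrow)) :=
      Abelian.monoIsKernelOfCokernel (CokernelCofork.ofπ _ (cokernel.condition P.arrow))
        (cokernelIsCokernel P.arrow)
    -- k is a kernel of fst
    have hcond : ∀ {W : A} (t : W ⟶ Q), t ≫ fst = 0 → (t ≫ snd) ≫ π = 0 := by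
      intro W t ht
      rw [Category.assoc, ← pullback.condition, ← Category.assoc, ht, zero_comp]
    have hfac : ∀ {W : A} (t : W ⟶ Q) (ht : t ≫ fst = 0),
        hPker.lift (KernelFork.ofι (t ≫ snd) (hcond t ht)) ≫ k = t := by
      intro W t ht
      apply pullback.hom_ext
      · simp only [Category.assoc]
        rw [hkf, comp_zero, ht]
      · have := hPker.fac (KernelFork.ofι (t ≫ snd) (hcond t ht)) WalkingParallelPair.zero
        simp only [Category.assoc]
        rw [hks]
        simpa using this
    have hkker : IsLimit (KernelFork.ofι k hkf) :=
      KernelFork.IsLimit.ofι _ _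
        (fun {W} t ht => hPker.lift (KernelFork.ofι (t ≫ snd) (hcond t ht)))
        (fun {W} t ht => hfac t ht)
        (fun {W} t ht m' hm' => by rw [← cancel_mono k, hfac t ht, hm'])
    have hQT : Q ∈ T := hExt (ShortComplex.mk k fst hkf)
      ⟨ShortComplex.exact_of_f_is_kernel _ hkker⟩ hPT hIT
    -- the subobject given by snd
    have hsmono : Mono snd := inferInstance
    have hle : P ≤ Subobject.mk snd := Subobject.le_mk_of_comm k hks
    have hin : ((Subobject.mk snd : Subobject X) : A) ∈ T :=
      hIso _ _ (Subobject.underlyingIso snd).symm hQT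
    have heq : P = Subobject.mk snd := by
      by_contra hne
      exact hPmax _ hin (lt_of_le_of_ne hle hne)
    -- derive contradiction
    set v : (P : A) ⟶ Q := (Subobject.isoOfEqMk P snd heq).hom with hv
    have hviso : IsIso v := by
      rw [hv]; infer_instance
    have hvs : v ≫ snd = P.arrow := Subobject.ofLEMk_comp heq.le
    have hvf : v ≫ fst = 0 := by
      rw [← cancel_mono m, Category.assoc, pullback.condition, ← Category.assoc, hvs,
        zero_comp]
      simp [hπ]
    have hfst0 : fst = 0 := by
      rw [← cancel_epi v, hvf, comp_zero]
    have hIz : IsZero (Abelian.image f) := by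
      rw [hfst0] at hepi
      exact @IsZero.of_epi_zero A _ _ _ _ hepi
    have : f = 0 := by
      rw [← Abelian.image.fac f, hIz.eq_zero_of_src (Abelian.image.ι f), comp_zero]
    exact hf this
end

section
/- Let 𝒜 be an artinian abelian category (every object satisfies the descending chain condition on subobjects) and let ℱ be a torsion-free class in 𝒜. Then ℱ is a strong torsion-free class: setting 𝒯 = {T ∈ 𝒜 : Hom(T, F) = 0 for all F ∈ ℱ}, the pair (𝒯, ℱ) is a torsion pair, i.e., every object X of 𝒜 fits into a short exact sequence 0 → T → X → F → 0 with T ∈ 𝒯 and F ∈ ℱ. -/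
universe v u

open CategoryTheory CategoryTheory.Limits

/-!
Artinianity gives a subobject `T ≤ X` minimal among those with `X / T ∈ F`. A nonzero
`f : T ⟶ F₀` with `F₀ ∈ F` would contradict minimality: `T / ker f ≅ im f ⊆ F₀` lies in `F`,
so the extension `0 → T / ker f → X / ker f → X / T → 0` puts `X / ker f` in `F`, while
`ker f < T`.
-/

lemma CategoryTheory.ShortComplex.shortExact_cokernel_comp {C : Type*} [Category C] [Abelian C]
    {X Y Z : C} (f : X ⟶ Y) (g : Y ⟶ Z) [Mono g] :
    (ShortComplex.mk (cokernel.map f (f ≫ g) (𝟙 _) g (by simp))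
      (cokernel.map (f ≫ g) g f (𝟙 _) (by simp)) (by ext; simp)).ShortExact := by
  have hseq := kernelCokernelCompSequence_exact f g
  have hepi : Epi ((kernelCokernelCompSequence f g).map' 4 5) := inferInstance
  exact { exact := hseq.exact 3, epi_g := hepi,
          mono_f := (hseq.exact 2).mono_g ((isZero_kernel_of_mono g).eq_of_src _ _) }

namespace IsTorsionFreeClass

variable {A : Type u} [Category.{v} A] [Abelian A] {F : Set A}

lemma cokernel_epi_comp_mem (hF : IsTorsionFreeClass A F) {W Y Z : A} (e : W ⟶ Y) [Epi e]
    (g : Y ⟶ Z) (hg : cokernel g ∈ F) : cokernel (e ≫ g) ∈ F :=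
  hF.1 _ _ (cokernelEpiComp e g).symm hg

lemma cokernel_comp_mem (hF : IsTorsionFreeClass A F) {X Y Z : A} (f : X ⟶ Y) (g : Y ⟶ Z)
    [Mono g] (hf : cokernel f ∈ F) (hg : cokernel g ∈ F) : cokernel (f ≫ g) ∈ F :=
  hF.2.2.2 _ (ShortComplex.shortExact_cokernel_comp f g) hf hg

lemma cokernel_mk_arrow_mem (hF : IsTorsionFreeClass A F) {Y X : A} (g : Y ⟶ X) [Mono g]
    (hg : cokernel g ∈ F) : cokernel (Subobject.mk g).arrow ∈ F := by
  rw [← Subobject.underlyingIso_hom_comp_eq_mk]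
  exact hF.cokernel_epi_comp_mem _ _ hg

lemma cokernel_kernelSubobject_arrow_mem (hF : IsTorsionFreeClass A F) {T F₀ : A} (f : T ⟶ F₀)
    (hF₀ : F₀ ∈ F) : cokernel (kernelSubobject f).arrow ∈ F := by
  rw [← kernelSubobject_arrow]
  refine hF.cokernel_epi_comp_mem _ _ (hF.1 _ _ (Abelian.coimageIsoImage f).symm ?_)
  exact hF.2.2.1 _ _ (Abelian.image.ι f) inferInstance hF₀

lemma hom_eq_zero_of_minimal (hF : IsTorsionFreeClass A F) {X : A} {T : Subobject X}
    (hmin : ∀ S < T, cokernel S.arrow ∉ F) (hT : cokernel T.arrow ∈ F) {F₀ : A} (hF₀ : F₀ ∈ F)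
    (f : (T : A) ⟶ F₀) : f = 0 := by
  by_contra hf
  have hK : kernelSubobject f < ⊤ := by
    refine lt_top_iff_ne_top.2 fun htop => hf ?_
    have : IsIso (kernelSubobject f).arrow := (Subobject.isIso_arrow_iff_eq_top _).2 htop
    rw [← cancel_epi (kernelSubobject f).arrow, kernelSubobject_arrow_comp, comp_zero]
  have hlt : ((Subobject.subobjectOrderIso T) (kernelSubobject f) : Subobject X) < T := by
    have h := (Subobject.subobjectOrderIso T).strictMono hK
    rw [OrderIso.map_top] at h
    exact Subtype.coe_lt_coe.2 h
  exact hmin _ hlt <| hF.cokernel_mk_arrow_mem _ <|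
    hF.cokernel_comp_mem _ _ (hF.cokernel_kernelSubobject_arrow_mem f hF₀) hT

end IsTorsionFreeClass

theorem torsionFree_class_is_strong_of_artinian
    (A : Type u) [Category.{v} A] [Abelian A]
    (hart : ∀ X : A, WellFoundedLT (Subobject X))
    (F : Set A) (hF : IsTorsionFreeClass A F) :
    ∀ X : A, ∃ S : ShortComplex A, S.ShortExact ∧
      (∀ F₀ ∈ F, ∀ f : S.X₁ ⟶ F₀, f = 0) ∧ S.X₃ ∈ F ∧ Nonempty (S.X₂ ≅ X) := by
  intro X
  have htop : cokernel (⊤ : Subobject X).arrow ∈ F :=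
    hF.2.1 _ (isZero_cokernel_of_epi _)
  obtain ⟨T, hT, hmin⟩ := (hart X).wf.has_min {T | cokernel T.arrow ∈ F} ⟨⊤, htop⟩
  refine ⟨ShortComplex.mk T.arrow (cokernel.π T.arrow) (cokernel.condition _),
    ⟨ShortComplex.exact_of_g_is_cokernel _ (cokernelIsCokernel _)⟩,
    fun F₀ hF₀ f => hF.hom_eq_zero_of_minimal (fun S hS h => hmin S h hS) hT hF₀ f, hT,
    ⟨Iso.refl X⟩⟩
end

section
/- Let 𝒜 be a well-powered cocomplete abelian category and 𝒯 a subcategory of 𝒜. Then 𝒯 is a strong torsion class (i.e., there is a subcategory ℱ such that (𝒯, ℱ) is a torsion pair) if and only if 𝒯 is a torsion class that is closed under (arbitrary) coproducts. -/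
universe v u

open CategoryTheory CategoryTheory.Limits

/-!
If `(T, F)` is a torsion pair, then `T` is exactly the left orthogonal of `F`: an object admitting
no nonzero map to `F` has zero torsion-free quotient in its torsion sequence. A left orthogonal is
always closed under quotients, extensions and coproducts.

Conversely, let `tX` be the supremum of the subobjects of `X` lying in `T`; it exists because `A`
is well-powered, and lies in `T` as a quotient of their coproduct. A map `g : C ⟶ X/tX` with
`C ∈ T` vanishes: its pullback along `X ⟶ X/tX` is an extension of `C` by `tX`, hence lies in `T`,
so its image in `X` lies in `tX`.
-/

open ObjectProperty (leftOrthogonal rightOrthogonal)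

variable {A : Type u} [Category.{v} A] [Abelian A]

def CoproductsClosed [HasCoproducts.{v} A] (C : Set A) : Prop :=
  ∀ (ι : Type v) (f : ι → A), (∀ i, f i ∈ C) → (∐ f) ∈ C

section LeftOrthogonal

variable (F : Set A)

lemma isTorsionClass_leftOrthogonal : IsTorsionClass A (leftOrthogonal F) := by
  refine ⟨fun X Y e hX Z g hZ => ?_, fun X hX Y f _ => hX.eq_of_src f 0, ?_, ?_⟩
  · rw [← cancel_epi e.hom, comp_zero]
    exact hX _ hZ
  · intro X Y f _ hX Z g hZ
    rw [← cancel_epi f, comp_zero]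
    exact hX _ hZ
  · intro S hS h₁ h₃ Z g hZ
    have := hS.epi_g
    have hfg : S.f ≫ g = 0 := h₁ _ hZ
    rw [← hS.exact.g_desc g hfg, h₃ (hS.exact.desc g hfg) hZ, comp_zero]

lemma coproductsClosed_leftOrthogonal [HasCoproducts.{v} A] :
    CoproductsClosed (leftOrthogonal F) :=
  fun _ f hf _ g hZ => Sigma.hom_ext g 0 fun i => by rw [comp_zero]; exact hf i _ hZ

end LeftOrthogonal

section RightOrthogonal

variable (T : Set A)

lemma isoClosed_rightOrthogonal : IsoClosed A (rightOrthogonal T) := by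
  intro X Y e hX Z g hZ
  rw [← cancel_mono e.inv, zero_comp]
  exact hX _ hZ

lemma containsZero_rightOrthogonal : ContainsZero A (rightOrthogonal T) :=
  fun _ hY _ f _ => hY.eq_of_tgt f 0

end RightOrthogonal

lemma eq_leftOrthogonal_of_torsion_sequences {T F : Set A} (hiso : IsoClosed A T)
    (horth : ∀ X ∈ T, ∀ Y ∈ F, ∀ f : X ⟶ Y, f = 0)
    (hseq : ∀ X : A, ∃ S : ShortComplex A, S.ShortExact ∧
      S.X₁ ∈ T ∧ S.X₃ ∈ F ∧ Nonempty (S.X₂ ≅ X)) :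
    T = leftOrthogonal F := by
  refine Set.Subset.antisymm (fun X hX Y f hY => horth X hX Y hY f) fun X hX => ?_
  obtain ⟨S, hS, h₁, h₃, ⟨e⟩⟩ := hseq X
  have := hS.epi_g
  have hg : S.g = 0 := by
    rw [← cancel_epi e.inv, comp_zero]
    exact hX _ h₃
  have : IsIso S.f := hS.isIso_f_iff.2 (IsZero.of_epi_eq_zero S.g hg)
  exact hiso _ _ (asIso S.f ≪≫ e) h₁

noncomputable abbrev CategoryTheory.ShortComplex.pullbackAlong (S : ShortComplex A) {C : A}
    (g : C ⟶ S.X₃) : ShortComplex A :=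
  ShortComplex.mk (pullback.lift S.f 0 (by simp) : S.X₁ ⟶ pullback S.g g) (pullback.snd S.g g)
    (pullback.lift_snd _ _ _)

lemma CategoryTheory.ShortComplex.ShortExact.pullbackAlong {S : ShortComplex A}
    (hS : S.ShortExact) {C : A} (g : C ⟶ S.X₃) : (S.pullbackAlong g).ShortExact := by
  have := hS.mono_f
  have := hS.epi_g
  have hf : (S.pullbackAlong g).f ≫ pullback.fst S.g g = S.f := pullback.lift_fst _ _ _
  have : Mono (S.pullbackAlong g).f := mono_of_mono_fac hf
  refine .mk' (exact_of_f_is_kernel _ (KernelFork.IsLimit.ofι' _ _ fun k hk => ?_))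
    inferInstance (Abelian.epi_pullback_of_epi_f S.g g)
  have hk' : (k ≫ pullback.fst S.g g) ≫ S.g = 0 := by
    rw [Category.assoc, pullback.condition, ← Category.assoc, hk, zero_comp]
  refine ⟨hS.exact.lift _ hk', pullback.hom_ext ?_ ?_⟩
  · rw [Category.assoc, hf, hS.exact.lift_f]
  · rw [Category.assoc, pullback.lift_snd, comp_zero, hk]

section TorsionSubobject

variable [WellPowered.{v} A] [HasCoproducts.{v} A] {T : Set A} (X : A)

noncomputable def torsionSubobject (T : Set A) (X : A) : Subobject X :=
  Subobject.sSup.{v} {S : Subobject X | (S : A) ∈ T}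

lemma torsionSubobject_mem (hquot : QuotientsClosed A T) (hcoprod : CoproductsClosed T) :
    (torsionSubobject T X : A) ∈ T := by
  -- `Subobject.sSup` is by construction the image of the coproduct of the subobjects.
  let d := Subobject.smallCoproductDesc.{v} {S : Subobject X | (S : A) ∈ T}
  change (Subobject.mk (image.ι d) : A) ∈ T
  exact hquot _ _ (factorThruImage d ≫ (Subobject.underlyingIso _).inv) inferInstance
    (hcoprod _ _ fun j => (Subobject.symm_apply_mem_iff_mem_image _ _ _).2 j.2)

lemma comp_cokernel_torsionSubobject_eq_zero (hquot : QuotientsClosed A T) {C : A} (hC : C ∈ T)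
    (q : C ⟶ X) : q ≫ cokernel.π (torsionSubobject T X).arrow = 0 := by
  have hle : imageSubobject q ≤ torsionSubobject T X :=
    Subobject.le_sSup.{v} _ _ (hquot _ _ (factorThruImageSubobject q) inferInstance hC)
  rw [← imageSubobject_arrow_comp q, ← Subobject.ofLE_arrow hle, Category.assoc, Category.assoc,
    cokernel.condition, comp_zero, comp_zero]

noncomputable abbrev torsionSequence (T : Set A) (X : A) : ShortComplex A :=
  ShortComplex.mk (torsionSubobject T X).arrow (cokernel.π _) (cokernel.condition _)

lemma torsionSequence_shortExact : (torsionSequence T X).ShortExact :=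
  .mk' (ShortComplex.exact_of_g_is_cokernel _ (cokernelIsCokernel _)) inferInstance inferInstance

lemma rightOrthogonal_torsionSequence_X₃ (hquot : QuotientsClosed A T) (hext : ExtClosed A T)
    (hcoprod : CoproductsClosed T) : rightOrthogonal T (torsionSequence T X).X₃ := by
  intro C g hC
  have hS := (torsionSequence_shortExact (T := T) X).pullbackAlong g
  have hP : pullback (cokernel.π _) g ∈ T := hext _ hS (torsionSubobject_mem X hquot hcoprod) hC
  have := hS.epi_g
  rw [← cancel_epi (pullback.snd (torsionSequence T X).g g), comp_zero, ← pullback.condition]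
  exact comp_cokernel_torsionSubobject_eq_zero X hquot hP _

end TorsionSubobject

theorem strong_torsion_class_iff_closed_under_coproducts_general
    (A : Type u) [Category.{v} A] [Abelian A] [WellPowered.{v} A] [HasColimits A]
    (T : Set A) (hiso : IsoClosed A T) :
    (∃ F : Set A, IsoClosed A F ∧ ContainsZero A F ∧
        (∀ X ∈ T, ∀ Y ∈ F, ∀ f : X ⟶ Y, f = 0) ∧
        (∀ X : A, ∃ S : ShortComplex A, S.ShortExact ∧
          S.X₁ ∈ T ∧ S.X₃ ∈ F ∧ Nonempty (S.X₂ ≅ X))) ↔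
      (IsTorsionClass A T ∧
        ∀ (ι : Type v) (f : ι → A), (∀ i, f i ∈ T) → (∐ f) ∈ T) := by
  constructor
  · rintro ⟨F, -, -, horth, hseq⟩
    rw [eq_leftOrthogonal_of_torsion_sequences hiso horth hseq]
    exact ⟨isTorsionClass_leftOrthogonal F, coproductsClosed_leftOrthogonal F⟩
  · rintro ⟨⟨-, -, hquot, hext⟩, hcoprod⟩
    refine ⟨rightOrthogonal T, isoClosed_rightOrthogonal T, containsZero_rightOrthogonal T,
      fun X hX Y hY f => hY f hX, fun X => ?_⟩
    exact ⟨torsionSequence T X, torsionSequence_shortExact X,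
      torsionSubobject_mem X hquot hcoprod, rightOrthogonal_torsionSequence_X₃ X hquot hext hcoprod,
      ⟨Iso.refl X⟩⟩

theorem strong_torsion_class_iff_closed_under_coproducts
    (A : Type u) [Category.{v} A] [Abelian A] [WellPowered.{v} A] [HasColimits A]
    (T : Set A) (hiso : IsoClosed A T) (hzero : ContainsZero A T) :
    (∃ F : Set A, IsoClosed A F ∧ ContainsZero A F ∧
        (∀ X ∈ T, ∀ Y ∈ F, ∀ f : X ⟶ Y, f = 0) ∧
        (∀ X : A, ∃ S : ShortComplex A, S.ShortExact ∧
          S.X₁ ∈ T ∧ S.X₃ ∈ F ∧ Nonempty (S.X₂ ≅ X))) ↔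
      (IsTorsionClass A T ∧
        ∀ (ι : Type v) (f : ι → A), (∀ i, f i ∈ T) → (∐ f) ∈ T) :=
  strong_torsion_class_iff_closed_under_coproducts_general A T hiso
end
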